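/- There exists a constant C > 0 (depending only on q and a) such that for every integer m ≥ 1, |∫₀^a (Q(x) − Q₀)² e^{−2(2m+2)π i x/a} dx| ≤ C ρ(m)/m. -/

import Mathlib

open MeasureTheory Filter Set intervalIntegral

noncomputable section

/-- The complex exponential `e^{2π i n x / a}`. -/
def e2 (a : ℝ) (n : ℤ) (x : ℝ) : ℂ :=
  Complex.exp (((2 * Real.pi * n * x / a : ℝ) : ℂ) * Complex.I)

/-- The `n`-th Fourier coefficient `c_n = (1/a) ∫₀^a q(x) e^{-2π i n x/a} dx`. -/
def fc (a : ℝ) (q : ℝ → ℝ) (n : ℤ) : ℂ :=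
  (1 / (a : ℂ)) * ∫ x in (0:ℝ)..a, (q x : ℂ) * e2 a (-n) x

/-- `ρ(m)`: the maximum of the two uniform norms of `x ↦ ∫₀ˣ q(t) e^{∓2(2m+2)π i t/a} dt`. -/
def rho (a : ℝ) (q : ℝ → ℝ) (m : ℕ) : ℝ :=
  max (⨆ x : Set.Icc (0:ℝ) a, ‖∫ t in (0:ℝ)..(x : ℝ), (q t : ℂ) * e2 a (-(2*(m:ℤ)+2)) t‖)
      (⨆ x : Set.Icc (0:ℝ) a, ‖∫ t in (0:ℝ)..(x : ℝ), (q t : ℂ) * e2 a (2*(m:ℤ)+2) t‖)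

/-- `Q(x) = (1/a) ∫₀ˣ q(t) dt`. -/
def Qf (a : ℝ) (q : ℝ → ℝ) (x : ℝ) : ℝ :=
  (1 / a) * ∫ t in (0:ℝ)..x, q t

/-- `Q₀ = (1/a) ∫₀^a Q(x) dx`. -/
def Q0 (a : ℝ) (q : ℝ → ℝ) : ℝ :=
  (1 / a) * ∫ x in (0:ℝ)..a, Qf a q x

/-- `G⁺(x,m) = (1/a)∫₀ˣ q(t) e^{-2(2m+2)π i t/a} dt − (c_{2m+2}/a) x`. -/
def Gp (a : ℝ) (q : ℝ → ℝ) (m : ℕ) (x : ℝ) : ℂ :=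
  (1 / (a : ℂ)) * (∫ t in (0:ℝ)..x, (q t : ℂ) * e2 a (-(2*(m:ℤ)+2)) t)
    - (fc a q (2*(m:ℤ)+2) / a) * x

/-- `G⁻(x,m) = (1/a)∫₀ˣ q(t) e^{+2(2m+2)π i t/a} dt − (c_{−(2m+2)}/a) x`. -/
def Gm (a : ℝ) (q : ℝ → ℝ) (m : ℕ) (x : ℝ) : ℂ :=
  (1 / (a : ℂ)) * (∫ t in (0:ℝ)..x, (q t : ℂ) * e2 a (2*(m:ℤ)+2) t)
    - (fc a q (-(2*(m:ℤ)+2)) / a) * x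

/-- `G₀⁺(m) = (1/a) ∫₀^a G⁺(x,m) dx`. -/
def Gp0 (a : ℝ) (q : ℝ → ℝ) (m : ℕ) : ℂ :=
  (1 / (a : ℂ)) * ∫ x in (0:ℝ)..a, Gp a q m x

/-- `G₀⁻(m) = (1/a) ∫₀^a G⁻(x,m) dx`. -/
def Gm0 (a : ℝ) (q : ℝ → ℝ) (m : ℕ) : ℂ :=
  (1 / (a : ℂ)) * ∫ x in (0:ℝ)..a, Gm a q m x

/-- The pairing `(f,g) = (1/a) ∫₀^a f(x) conj(g(x)) dx`. -/
def ip (a : ℝ) (f g : ℝ → ℂ) : ℂ :=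
  (1 / (a : ℂ)) * ∫ x in (0:ℝ)..a, f x * (starRingEnd ℂ) (g x)

/-- `ν_j = ((2j+2)π/a)²`. -/
def nuZ (a : ℝ) (j : ℤ) : ℝ :=
  ((2 * (j : ℝ) + 2) * Real.pi / a) ^ 2

/-- `Ψ` is an eigenfunction of `y'' + (λ − q) y = 0` with the periodic boundary
conditions `y(0) = y(a)`, `y'(0) = y'(a)`: `Ψ` is not identically zero, continuously
differentiable, `Ψ'` is absolutely continuous on `[0,a]` (i.e. it is the integral of
an integrable function `Ψ''`), and the equation holds a.e. on `[0,a]`. -/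
def IsEigenfunc (a : ℝ) (q : ℝ → ℝ) (lam : ℝ) (Ψ : ℝ → ℂ) : Prop :=
  (∃ x ∈ Set.Icc (0:ℝ) a, Ψ x ≠ 0) ∧
  ∃ Ψ' Ψ'' : ℝ → ℂ,
    (∀ x, HasDerivAt Ψ (Ψ' x) x) ∧ Continuous Ψ' ∧
    MeasureTheory.IntegrableOn Ψ'' (Set.Icc 0 a) ∧
    (∀ x ∈ Set.Icc (0:ℝ) a, Ψ' x = Ψ' 0 + ∫ t in (0:ℝ)..x, Ψ'' t) ∧
    (∀ᵐ x ∂(MeasureTheory.volume.restrict (Set.Icc (0:ℝ) a)),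
      Ψ'' x + ((lam : ℂ) - (q x : ℂ)) * Ψ x = 0) ∧
    Ψ 0 = Ψ a ∧ Ψ' 0 = Ψ' a

/-- `λ` is a periodic eigenvalue if it has an eigenfunction. -/
def IsPeriodicEV (a : ℝ) (q : ℝ → ℝ) (lam : ℝ) : Prop :=
  ∃ Ψ : ℝ → ℂ, IsEigenfunc a q lam Ψ

end

/-! Write `V x = ∫₀ˣ q`, so that `Q = V / a`; the hypothesis `c₀ = 0` says `V a = 0`. Expanding
`(V / a - Q₀)²` and integrating by parts against `e^{-iωx}`, `ω = 2π(2m+2)/a`, gains a factor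
`1/ω` in each term. With `R x = ∫₀ˣ q(t) e^{-iωt} dt` the integral equals
`-(2 Q₀ R(a) / a + 2 ∫₀^a q R / a²) / (iω)`, and `|R| ≤ ρ(m)` on `[0,a]` gives the bound
`(|Q₀| + ‖q‖₁ / a) ρ(m) / (π (2m+2))`.

Primitives of integrable functions are only absolutely continuous, so integration by parts is
obtained from Fubini's theorem on the triangle `0 ≤ t ≤ x ≤ b`. -/

open Complex

section Primitive

variable {𝕜 : Type*} [RCLike 𝕜] {b : ℝ} {f g : ℝ → 𝕜}

theorem integral_mul_primitive_eq (hb : 0 ≤ b) (hf : IntervalIntegrable f volume 0 b)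
    (hg : IntervalIntegrable g volume 0 b) :
    ∫ x in (0:ℝ)..b, f x * ∫ t in (0:ℝ)..x, g t
      = ∫ t in (0:ℝ)..b, g t * ∫ x in t..b, f x := by
  rw [intervalIntegrable_iff_integrableOn_Ioc_of_le hb] at hf hg
  set μ := volume.restrict (Ioc (0:ℝ) b)
  have hK : Integrable (Function.uncurry fun x t =>
      {p : ℝ × ℝ | p.2 ≤ p.1}.indicator (fun p => f p.1 * g p.2) (x, t)) (μ.prod μ) :=
    (hf.mul_prod hg).indicator (measurableSet_le measurable_snd measurable_fst)
  have hL : ∀ x ∈ Ioc 0 b, f x * ∫ t in (0:ℝ)..x, g t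
      = ∫ t, {p : ℝ × ℝ | p.2 ≤ p.1}.indicator (fun p => f p.1 * g p.2) (x, t) ∂μ := by
    intro x hx
    have hsec : (fun t => {p : ℝ × ℝ | p.2 ≤ p.1}.indicator (fun p => f p.1 * g p.2) (x, t))
        = (Iic x).indicator fun t => f x * g t := by
      ext t; simp [Set.indicator_apply]
    rw [hsec, MeasureTheory.integral_indicator measurableSet_Iic,
      Measure.restrict_restrict measurableSet_Iic, Iic_inter_Ioc_of_le hx.2,
      MeasureTheory.integral_const_mul, intervalIntegral.integral_of_le hx.1.le]
  have hR : ∀ t ∈ Ioc 0 b, g t * ∫ x in t..b, f x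
      = ∫ x, {p : ℝ × ℝ | p.2 ≤ p.1}.indicator (fun p => f p.1 * g p.2) (x, t) ∂μ := by
    intro t ht
    have hsec : (fun x => {p : ℝ × ℝ | p.2 ≤ p.1}.indicator (fun p => f p.1 * g p.2) (x, t))
        = (Ici t).indicator fun x => g t * f x := by
      ext x; simp [Set.indicator_apply, mul_comm]
    rw [hsec, MeasureTheory.integral_indicator measurableSet_Ici,
      Measure.restrict_restrict measurableSet_Ici, MeasureTheory.integral_const_mul,
      intervalIntegral.integral_of_le ht.2]
    have hset : Ici t ∩ Ioc 0 b = Icc t b := by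
      ext x
      simp only [mem_inter_iff, mem_Ici, mem_Ioc, mem_Icc]
      constructor
      · exact fun h => ⟨h.1, h.2.2⟩
      · exact fun h => ⟨h.1, ht.1.trans_le h.1, h.2⟩
    rw [hset, integral_Icc_eq_integral_Ioc]
  rw [intervalIntegral.integral_of_le hb, intervalIntegral.integral_of_le hb,
    setIntegral_congr_fun measurableSet_Ioc hL, setIntegral_congr_fun measurableSet_Ioc hR]
  exact integral_integral_swap hK

theorem integral_mul_primitive_add_integral_mul_primitive (hb : 0 ≤ b)
    (hf : IntervalIntegrable f volume 0 b) (hg : IntervalIntegrable g volume 0 b) :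
    (∫ x in (0:ℝ)..b, f x * ∫ t in (0:ℝ)..x, g t) + ∫ x in (0:ℝ)..b, g x * ∫ t in (0:ℝ)..x, f t
      = (∫ x in (0:ℝ)..b, f x) * ∫ x in (0:ℝ)..b, g x := by
  have htail : ∀ t ∈ uIcc 0 b, g t * ∫ x in t..b, f x
      = g t * (∫ x in (0:ℝ)..b, f x) - g t * ∫ x in (0:ℝ)..t, f x := by
    intro t ht
    rw [← integral_interval_sub_left hf (hf.mono_set (uIcc_subset_uIcc_left ht)), mul_sub]
  have hgF : IntervalIntegrable (fun x => g x * ∫ t in (0:ℝ)..x, f t) volume 0 b :=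
    hg.mul_continuousOn (continuousOn_primitive_interval' hf left_mem_uIcc)
  rw [integral_mul_primitive_eq hb hf hg, integral_congr htail,
    intervalIntegral.integral_sub (hg.mul_const _) hgF, intervalIntegral.integral_mul_const]
  ring

theorem sq_integral_eq_two_mul_integral_mul_primitive (hb : 0 ≤ b)
    (hg : IntervalIntegrable g volume 0 b) :
    (∫ x in (0:ℝ)..b, g x) ^ 2 = ∫ x in (0:ℝ)..b, 2 * (g x * ∫ t in (0:ℝ)..x, g t) := by
  rw [intervalIntegral.integral_const_mul, two_mul,
    integral_mul_primitive_add_integral_mul_primitive hb hg hg, sq]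

end Primitive

section Exponential

variable {a : ℝ} {n : ℤ}

noncomputable def angFreq (a : ℝ) (n : ℤ) : ℝ := 2 * Real.pi * n / a

theorem e2_eq_exp (a : ℝ) (n : ℤ) (x : ℝ) : e2 a n x = exp (angFreq a n * I * x) := by
  rw [e2, angFreq]
  push_cast
  ring_nf

theorem angFreq_ne_zero (ha : a ≠ 0) (hn : n ≠ 0) : angFreq a n ≠ 0 := by
  unfold angFreq
  have := Real.pi_pos
  positivity

theorem abs_angFreq (ha : 0 < a) (n : ℤ) : |angFreq a n| = 2 * Real.pi * |(n : ℝ)| / a := by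
  rw [angFreq, abs_div, abs_mul, abs_of_pos ha, abs_of_pos Real.two_pi_pos]

theorem continuous_e2 (a : ℝ) (n : ℤ) : Continuous (e2 a n) := by
  unfold e2
  fun_prop

theorem e2_zero (a : ℝ) (n : ℤ) : e2 a n 0 = 1 := by
  simp [e2]

theorem e2_self (ha : a ≠ 0) (n : ℤ) : e2 a n a = 1 := by
  rw [e2, mul_div_assoc, div_self ha, mul_one, ← Complex.exp_int_mul_two_pi_mul_I n]
  push_cast
  ring_nf

theorem integral_e2 (ha : a ≠ 0) (hn : n ≠ 0) (s t : ℝ) :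
    ∫ x in s..t, e2 a n x = (e2 a n t - e2 a n s) / (angFreq a n * I) := by
  simp_rw [e2_eq_exp]
  exact integral_exp_mul_complex (mul_ne_zero (by exact_mod_cast angFreq_ne_zero ha hn) I_ne_zero)

theorem integral_e2_eq_zero (ha : a ≠ 0) (hn : n ≠ 0) : ∫ x in (0:ℝ)..a, e2 a n x = 0 := by
  rw [integral_e2 ha hn, e2_self ha, e2_zero, sub_self, zero_div]

theorem integral_e2_mul_primitive (ha : 0 < a) (hn : n ≠ 0) {h : ℝ → ℂ}
    (hh : IntervalIntegrable h volume 0 a) :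
    ∫ x in (0:ℝ)..a, e2 a n x * ∫ t in (0:ℝ)..x, h t
      = ((∫ x in (0:ℝ)..a, h x) - ∫ x in (0:ℝ)..a, h x * e2 a n x) / (angFreq a n * I) := by
  have he := (continuous_e2 a n).intervalIntegrable (μ := volume) 0 a
  have hparts := integral_mul_primitive_add_integral_mul_primitive ha.le he hh
  have hprim : ∀ x ∈ uIcc 0 a, h x * ∫ t in (0:ℝ)..x, e2 a n t
      = (h x * e2 a n x - h x) / (angFreq a n * I) := by
    intro x _
    rw [integral_e2 ha.ne' hn, e2_zero, mul_div_assoc', mul_sub_one]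
  rw [integral_e2_eq_zero ha.ne' hn, zero_mul, integral_congr hprim,
    intervalIntegral.integral_div,
    intervalIntegral.integral_sub (hh.mul_continuousOn (continuous_e2 a n).continuousOn) hh]
    at hparts
  rw [add_eq_zero_iff_eq_neg.mp hparts, ← neg_div, neg_sub]

theorem integral_sq_primitive_sub_mul_e2 (ha : 0 < a) (hn : n ≠ 0) {g : ℝ → ℂ}
    (hg : IntervalIntegrable g volume 0 a) (hg0 : ∫ x in (0:ℝ)..a, g x = 0) (k : ℂ) :
    ∫ x in (0:ℝ)..a, ((∫ t in (0:ℝ)..x, g t) / a - k) ^ 2 * e2 a n x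
      = (2 * k / a * (∫ t in (0:ℝ)..a, g t * e2 a n t)
          + 2 / a ^ 2 * ∫ x in (0:ℝ)..a, g x * ∫ t in (0:ℝ)..x, g t * e2 a n t)
        / (angFreq a n * I) := by
  set V : ℝ → ℂ := fun x => ∫ t in (0:ℝ)..x, g t
  set E : ℝ → ℂ := e2 a n
  have hE : Continuous E := continuous_e2 a n
  have hV : ContinuousOn V (uIcc 0 a) := continuousOn_primitive_interval' hg left_mem_uIcc
  have hgV : IntervalIntegrable (fun x => 2 * (g x * V x)) volume 0 a :=
    (hg.mul_continuousOn hV).const_mul 2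
  have hW : ContinuousOn (fun x => ∫ t in (0:ℝ)..x, 2 * (g t * V t)) (uIcc 0 a) :=
    continuousOn_primitive_interval' hgV left_mem_uIcc
  have hsq : ∀ x ∈ uIcc 0 a, V x ^ 2 = ∫ t in (0:ℝ)..x, 2 * (g t * V t) := by
    intro x hx
    have hx0 : 0 ≤ x := by rw [uIcc_of_le ha.le] at hx; exact hx.1
    exact sq_integral_eq_two_mul_integral_mul_primitive hx0
      (hg.mono_set (uIcc_subset_uIcc_left hx))
  have hexpand : ∀ x ∈ uIcc 0 a, (V x / a - k) ^ 2 * E x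
      = k ^ 2 * E x - 2 * k / a * (E x * V x)
        + 1 / a ^ 2 * (E x * ∫ t in (0:ℝ)..x, 2 * (g t * V t)) := by
    intro x hx
    rw [← hsq x hx]
    have : (a : ℂ) ≠ 0 := by exact_mod_cast ha.ne'
    field_simp
    ring
  have hEV := integral_e2_mul_primitive ha hn hg
  have hEW := integral_e2_mul_primitive ha hn hgV
  have hVa : (∫ x in (0:ℝ)..a, 2 * (g x * V x)) = 0 := by
    rw [← sq_integral_eq_two_mul_integral_mul_primitive ha.le hg, hg0, sq, zero_mul]
  have hparts := integral_mul_primitive_add_integral_mul_primitive ha.le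
    (hg.mul_continuousOn hE.continuousOn) hg
  rw [hg0, mul_zero] at hparts
  have hgVE : (∫ x in (0:ℝ)..a, 2 * (g x * V x) * E x)
      = -2 * ∫ x in (0:ℝ)..a, g x * ∫ t in (0:ℝ)..x, g t * E t := by
    have hswap : (∫ x in (0:ℝ)..a, 2 * (g x * V x) * E x)
        = 2 * ∫ x in (0:ℝ)..a, g x * E x * V x := by
      rw [← intervalIntegral.integral_const_mul]
      congr 1 with x
      ring
    rw [hswap]
    linear_combination 2 * hparts
  rw [integral_congr hexpand, intervalIntegral.integral_add, intervalIntegral.integral_sub,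
    intervalIntegral.integral_const_mul, intervalIntegral.integral_const_mul,
    intervalIntegral.integral_const_mul, integral_e2_eq_zero ha.ne' hn, hEV, hEW, hVa, hg0, hgVE]
  · ring
  all_goals exact ContinuousOn.intervalIntegrable (by fun_prop)

theorem norm_integral_sq_primitive_sub_mul_e2_le (ha : 0 < a) (hn : n ≠ 0)
    {g : ℝ → ℂ} (hg : IntervalIntegrable g volume 0 a) (hg0 : ∫ x in (0:ℝ)..a, g x = 0) (k : ℂ)
    {ρ : ℝ} (hR : ∀ x ∈ Icc 0 a, ‖∫ t in (0:ℝ)..x, g t * e2 a n t‖ ≤ ρ) :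
    ‖∫ x in (0:ℝ)..a, ((∫ t in (0:ℝ)..x, g t) / a - k) ^ 2 * e2 a n x‖
      ≤ (‖k‖ + (∫ x in (0:ℝ)..a, ‖g x‖) / a) * ρ / (Real.pi * |(n : ℝ)|) := by
  set R : ℝ → ℂ := fun x => ∫ t in (0:ℝ)..x, g t * e2 a n t
  set N := ∫ x in (0:ℝ)..a, ‖g x‖
  have hN : 0 ≤ N := intervalIntegral.integral_nonneg ha.le fun x _ => norm_nonneg (g x)
  have hρ : 0 ≤ ρ := (norm_nonneg _).trans (hR 0 ⟨le_rfl, ha.le⟩)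
  have hRa : ‖R a‖ ≤ ρ := hR a ⟨ha.le, le_rfl⟩
  have hgR : ‖∫ x in (0:ℝ)..a, g x * R x‖ ≤ N * ρ := by
    rw [← intervalIntegral.integral_mul_const]
    refine norm_integral_le_of_norm_le ha.le (Eventually.of_forall fun x hx => ?_)
      (hg.norm.mul_const ρ)
    rw [norm_mul]
    exact mul_le_mul_of_nonneg_left (hR x (Ioc_subset_Icc_self hx)) (norm_nonneg _)
  have hc : ‖(angFreq a n : ℂ) * I‖ = 2 * Real.pi * |(n : ℝ)| / a := by
    rw [norm_mul, norm_I, mul_one, norm_real, Real.norm_eq_abs, abs_angFreq ha]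
  have hn' : (0 : ℝ) < |(n : ℝ)| := abs_pos.mpr (Int.cast_ne_zero.mpr hn)
  rw [integral_sq_primitive_sub_mul_e2 ha hn hg hg0, norm_div, hc]
  calc _ ≤ (2 * ‖k‖ / a * ρ + 2 / a ^ 2 * (N * ρ)) / (2 * Real.pi * |(n : ℝ)| / a) := by
        gcongr
        refine (norm_add_le _ _).trans ?_
        simp only [norm_mul, norm_div, norm_pow, norm_real, Real.norm_eq_abs, abs_of_pos ha,
          RCLike.norm_ofNat]
        gcongr
    _ = _ := by
        field_simp

end Exponential

theorem fc_zero (a : ℝ) (q : ℝ → ℝ) : fc a q 0 = (1 / (a : ℂ)) * ∫ x in (0:ℝ)..a, (q x : ℂ) := by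
  simp [fc, e2]

theorem norm_integral_mul_e2_le_rho {a : ℝ} (ha : 0 ≤ a) {q : ℝ → ℝ}
    (hq : IntegrableOn q (Icc 0 a)) (m : ℕ) {x : ℝ} (hx : x ∈ Icc 0 a) :
    ‖∫ t in (0:ℝ)..x, (q t : ℂ) * e2 a (-(2 * (m : ℤ) + 2)) t‖ ≤ rho a q m := by
  have hcont : ContinuousOn (fun x => ‖∫ t in (0:ℝ)..x, (q t : ℂ) * e2 a (-(2 * (m : ℤ) + 2)) t‖)
      (Icc 0 a) := by
    rw [← uIcc_of_le ha]
    refine (continuousOn_primitive_interval ?_).norm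
    rw [uIcc_of_le ha]
    have hqc : IntegrableOn (fun t => (q t : ℂ)) (Icc 0 a) := hq.ofReal
    exact hqc.mul_continuousOn (continuous_e2 _ _).continuousOn isCompact_Icc
  have hbdd := isCompact_Icc.bddAbove_image hcont
  rw [image_eq_range] at hbdd
  exact (le_ciSup hbdd ⟨x, hx⟩).trans (le_max_left _ _)

theorem statement11_general (a : ℝ) (ha : 0 < a) (q : ℝ → ℝ)
    (hq : MeasureTheory.IntegrableOn q (Set.Icc 0 a))
    (hc0 : fc a q 0 = 0) :
    ∃ C > (0:ℝ), ∀ m : ℕ, 1 ≤ m →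
      ‖∫ x in (0:ℝ)..a, (((Qf a q x - Q0 a q : ℝ)) : ℂ)^2 * e2 a (-(2*(m:ℤ)+2)) x‖
        ≤ C * rho a q m / (m : ℝ) := by
  have hqi : IntervalIntegrable (fun x => (q x : ℂ)) volume 0 a :=
    (intervalIntegrable_iff_integrableOn_Icc_of_le ha.le).mpr hq.ofReal
  have hmean : ∫ x in (0:ℝ)..a, (q x : ℂ) = 0 := by
    simpa [fc_zero, ha.ne'] using hc0
  have hQ : ∀ x, ((Qf a q x - Q0 a q : ℝ) : ℂ) = (∫ t in (0:ℝ)..x, (q t : ℂ)) / a - Q0 a q := by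
    intro x
    simp [Qf, intervalIntegral.integral_ofReal, div_eq_inv_mul]
  set N := ∫ x in (0:ℝ)..a, ‖(q x : ℂ)‖
  have hN : 0 ≤ N := intervalIntegral.integral_nonneg ha.le fun x _ => norm_nonneg _
  refine ⟨|Q0 a q| + N / a + 1, by positivity, fun m hm => ?_⟩
  have hρ : 0 ≤ rho a q m :=
    (norm_nonneg _).trans (norm_integral_mul_e2_le_rho ha.le hq m ⟨le_rfl, ha.le⟩)
  have hn : -(2 * (m : ℤ) + 2) ≠ 0 := by omega
  simp_rw [hQ]
  refine (norm_integral_sq_primitive_sub_mul_e2_le ha hn hqi hmean _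
    fun x hx => norm_integral_mul_e2_le_rho ha.le hq m hx).trans ?_
  rw [norm_real, Real.norm_eq_abs]
  have hm' : (1 : ℝ) ≤ m := by exact_mod_cast hm
  have hfreq : (m : ℝ) ≤ Real.pi * |((-(2 * (m : ℤ) + 2) : ℤ) : ℝ)| := by
    push_cast
    rw [abs_neg, abs_of_pos (by positivity)]
    nlinarith [Real.pi_gt_three]
  calc _ ≤ (|Q0 a q| + N / a) * rho a q m / m := by gcongr
    _ ≤ _ := by gcongr ?_ * _ / _; linarith

/-- there is `C > 0` such that for every `m ≥ 1`,
`|∫₀^a (Q(x)−Q₀)² e^{−2(2m+2)π i x/a} dx| ≤ C ρ(m)/m`. -/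
theorem statement11 (a : ℝ) (ha : 0 < a) (q : ℝ → ℝ)
    (hq : MeasureTheory.IntegrableOn q (Set.Icc 0 a))
    (hper : ∀ x, q (x + a) = q x)
    (hc0 : fc a q 0 = 0) :
    ∃ C > (0:ℝ), ∀ m : ℕ, 1 ≤ m →
      ‖∫ x in (0:ℝ)..a, (((Qf a q x - Q0 a q : ℝ)) : ℂ)^2 * e2 a (-(2*(m:ℤ)+2)) x‖
        ≤ C * rho a q m / (m : ℝ) :=
  statement11_general a ha q hq hc0
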